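/- For the Coulomb potential in ℝ³ one has the Fefferman–de la Llave representation 1/|x−y| = (1/π) ∫₀^∞ ∫_{ℝ³} r^{−5} 𝟙_{|x−z|≤r} 𝟙_{|y−z|≤r} dz dr for all x ≠ y in ℝ³. -/

import Mathlib

/-!
The integrand is `r⁻⁵` times the volume of the lens `B(x, r) ∩ B(y, r)`. With `d = |x - y|`,
this lens is empty for `r < d / 2`; otherwise, after an isometry moving `y - x` onto the first
axis, slicing it perpendicular to that axis into discs of area `π (r² - max (t², (t - d)²))`
shows that it has volume `π/12 (2r - d)² (4r + d)`. The radial integral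
`∫_{d/2}^∞ π/12 (2r - d)² (4r + d) r⁻⁵ dr` then evaluates to `π / d`.
-/

open MeasureTheory Real Metric Filter Topology

section BallIntersection

variable {E : Type*} [NormedAddCommGroup E]

theorem measure_closedBall_inter_closedBall_eq_sub [MeasurableSpace E] [MeasurableAdd E]
    (μ : Measure E) [μ.IsAddLeftInvariant] (x y : E) (r : ℝ) :
    μ (closedBall x r ∩ closedBall y r) = μ (closedBall 0 r ∩ closedBall (y - x) r) := by
  rw [← measure_preimage_add μ x, Set.preimage_inter, preimage_add_closedBall,
    preimage_add_closedBall, sub_self]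

theorem volume_closedBall_inter_closedBall_congr [InnerProductSpace ℝ E] [FiniteDimensional ℝ E]
    [MeasurableSpace E] [BorelSpace E] {x y x' y' : E} (h : dist x y = dist x' y') (r : ℝ) :
    volume (closedBall x r ∩ closedBall y r) = volume (closedBall x' r ∩ closedBall y' r) := by
  have hnorm : ‖y' - x'‖ = ‖y - x‖ := by
    rw [← dist_eq_norm, ← dist_eq_norm, dist_comm, ← h, dist_comm]
  set R := (ℝ ∙ (y' - x' - (y - x)))ᗮ.reflection
  have hR : R (y' - x') = y - x := Submodule.reflection_sub hnorm
  rw [measure_closedBall_inter_closedBall_eq_sub, measure_closedBall_inter_closedBall_eq_sub _ x',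
    ← R.measurePreserving.measure_preimage
      (measurableSet_closedBall.inter measurableSet_closedBall).nullMeasurableSet,
    Set.preimage_inter, R.preimage_closedBall, R.preimage_closedBall, ← hR]
  simp [R]

end BallIntersection

theorem volume_disk (s : ℝ) :
    volume {v : Fin 2 → ℝ | v 0 ^ 2 + v 1 ^ 2 ≤ s} = ENNReal.ofReal (π * s) := by
  rcases lt_or_ge s 0 with hs | hs
  · have : {v : Fin 2 → ℝ | v 0 ^ 2 + v 1 ^ 2 ≤ s} = ∅ :=
      Set.eq_empty_of_forall_notMem fun v hv ↦ by
        nlinarith [sq_nonneg (v 0), sq_nonneg (v 1), hv.out]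
    rw [this, measure_empty, ENNReal.ofReal_of_nonpos (by nlinarith [pi_pos])]
  · have : {v : Fin 2 → ℝ | v 0 ^ 2 + v 1 ^ 2 ≤ s} =
        WithLp.toLp 2 ⁻¹' closedBall (0 : EuclideanSpace ℝ (Fin 2)) √s := by
      rw [EuclideanSpace.closedBall_zero_eq _ (sqrt_nonneg s), sq_sqrt hs]
      simp [Fin.sum_univ_two]
    rw [this, (PiLp.volume_preserving_toLp (Fin 2)).measure_preimage
      measurableSet_closedBall.nullMeasurableSet,
      InnerProductSpace.volume_closedBall_of_dim_even (k := 1) (by simp)]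
    simp [← ENNReal.ofReal_pow (sqrt_nonneg s), sq_sqrt hs, ← ENNReal.ofReal_mul hs, mul_comm]

theorem volume_solidOfRevolution {ρ : ℝ → ℝ} (hρ : Measurable ρ) :
    volume {w : Fin 3 → ℝ | w 1 ^ 2 + w 2 ^ 2 ≤ ρ (w 0)} = ∫⁻ t, ENNReal.ofReal (π * ρ t) := by
  let e := MeasurableEquiv.piFinSuccAbove (fun _ : Fin 3 ↦ ℝ) 0
  have he : MeasurePreserving e.symm (volume.prod volume) (volume : Measure (Fin 3 → ℝ)) :=
    (measurePreserving_piFinSuccAbove (fun _ ↦ volume) 0).symm e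
  have hmeas : MeasurableSet {w : Fin 3 → ℝ | w 1 ^ 2 + w 2 ^ 2 ≤ ρ (w 0)} :=
    measurableSet_le (by fun_prop) (hρ.comp (measurable_pi_apply 0))
  rw [← he.measure_preimage hmeas.nullMeasurableSet, Measure.prod_apply (e.symm.measurable hmeas)]
  congr with t
  convert volume_disk (ρ t) using 2
  ext v
  simp [e]
  rfl

theorem integral_lens_sections {d r : ℝ} (hd : 0 ≤ d) (hdr : d ≤ 2 * r) :
    ∫ t in (d - r)..r, π * (r ^ 2 - max (t ^ 2) ((t - d) ^ 2))
      = π / 12 * (2 * r - d) ^ 2 * (4 * r + d) := by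
  have hcont : Continuous fun t : ℝ ↦ π * (r ^ 2 - max (t ^ 2) ((t - d) ^ 2)) := by fun_prop
  rw [← intervalIntegral.integral_add_adjacent_intervals (b := d / 2)
    (hcont.intervalIntegrable _ _) (hcont.intervalIntegrable _ _)]
  have hleft : ∫ t in (d - r)..(d / 2), π * (r ^ 2 - max (t ^ 2) ((t - d) ^ 2))
      = ∫ t in (d - r)..(d / 2), π * (r ^ 2 - (d - t) ^ 2) := by
    refine intervalIntegral.integral_congr fun t ht ↦ ?_
    rw [Set.uIcc_of_le (by linarith), Set.mem_Icc] at ht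
    rw [max_eq_right (by nlinarith)]
    ring
  have hright : ∫ t in (d / 2)..r, π * (r ^ 2 - max (t ^ 2) ((t - d) ^ 2))
      = ∫ t in (d / 2)..r, π * (r ^ 2 - t ^ 2) := by
    refine intervalIntegral.integral_congr fun t ht ↦ ?_
    rw [Set.uIcc_of_le (by linarith), Set.mem_Icc] at ht
    rw [max_eq_left (by nlinarith)]
  -- the reflection `t ↦ d - t` exchanges the two halves of the lens
  rw [hleft, hright, intervalIntegral.integral_comp_sub_left (fun t ↦ π * (r ^ 2 - t ^ 2))]
  simp [intervalIntegral.integral_const_mul, integral_pow]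
  ring

theorem lintegral_lens_sections {d r : ℝ} (hd : 0 ≤ d) (hdr : d ≤ 2 * r) :
    ∫⁻ t, ENNReal.ofReal (π * (r ^ 2 - max (t ^ 2) ((t - d) ^ 2)))
      = ENNReal.ofReal (π / 12 * (2 * r - d) ^ 2 * (4 * r + d)) := by
  have hsupp : (fun t ↦ ENNReal.ofReal (π * (r ^ 2 - max (t ^ 2) ((t - d) ^ 2)))).support
      ⊆ Set.Icc (d - r) r := by
    intro t ht
    have : max (t ^ 2) ((t - d) ^ 2) < r ^ 2 := by
      by_contra! h
      exact ht (ENNReal.ofReal_of_nonpos (mul_nonpos_of_nonneg_of_nonpos pi_pos.le (by linarith)))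
    rw [max_lt_iff] at this
    constructor <;> nlinarith [this.1, this.2]
  have hnonneg : ∀ t ∈ Set.Icc (d - r) r, 0 ≤ π * (r ^ 2 - max (t ^ 2) ((t - d) ^ 2)) := by
    rintro t ⟨ht₁, ht₂⟩
    have : max (t ^ 2) ((t - d) ^ 2) ≤ r ^ 2 := max_le (by nlinarith) (by nlinarith)
    exact mul_nonneg pi_pos.le (by linarith)
  have hcont : Continuous fun t : ℝ ↦ π * (r ^ 2 - max (t ^ 2) ((t - d) ^ 2)) := by fun_prop
  rw [← setLIntegral_eq_of_support_subset hsupp, ← ofReal_integral_eq_lintegral_ofReal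
    hcont.integrableOn_Icc ((ae_restrict_iff' measurableSet_Icc).2 (.of_forall hnonneg)),
    integral_Icc_eq_integral_Ioc, ← intervalIntegral.integral_of_le (by linarith),
    integral_lens_sections hd hdr]

theorem volume_closedBall_zero_inter_closedBall_single {d r : ℝ} (hd : 0 ≤ d) (hdr : d ≤ 2 * r) :
    volume (closedBall 0 r ∩ closedBall (EuclideanSpace.single (0 : Fin 3) d) r)
      = ENNReal.ofReal (π / 12 * (2 * r - d) ^ 2 * (4 * r + d)) := by
  have hr : 0 ≤ r := by linarith
  have hlens : closedBall 0 r ∩ closedBall (EuclideanSpace.single (0 : Fin 3) d) r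
      = WithLp.ofLp ⁻¹'
        {w : Fin 3 → ℝ | w 1 ^ 2 + w 2 ^ 2 ≤ r ^ 2 - max (w 0 ^ 2) ((w 0 - d) ^ 2)} := by
    ext w
    simp [EuclideanSpace.norm_eq, EuclideanSpace.dist_eq, Real.dist_eq, sqrt_le_left hr,
      Fin.sum_univ_three]
    rw [le_sub_comm, max_le_iff]
    constructor <;> rintro ⟨h₁, h₂⟩ <;> constructor <;> linarith
  have hmeas : MeasurableSet
      {w : Fin 3 → ℝ | w 1 ^ 2 + w 2 ^ 2 ≤ r ^ 2 - max (w 0 ^ 2) ((w 0 - d) ^ 2)} :=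
    measurableSet_le (by fun_prop) (by fun_prop)
  rw [hlens, (PiLp.volume_preserving_ofLp (Fin 3)).measure_preimage hmeas.nullMeasurableSet,
    volume_solidOfRevolution (ρ := fun t ↦ r ^ 2 - max (t ^ 2) ((t - d) ^ 2)) (by fun_prop), lintegral_lens_sections hd hdr]

noncomputable def lensVolume (d r : ℝ) : ℝ :=
  if d ≤ 2 * r then π / 12 * (2 * r - d) ^ 2 * (4 * r + d) else 0

theorem volume_real_closedBall_inter_closedBall (x y : EuclideanSpace ℝ (Fin 3)) (r : ℝ) :
    volume.real (closedBall x r ∩ closedBall y r) = lensVolume (dist x y) r := by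
  unfold lensVolume
  split_ifs with h
  · have hd : dist x y = dist 0 (EuclideanSpace.single (0 : Fin 3) (dist x y)) := by
      simp
    have hr : 0 ≤ 4 * r + dist x y := by linarith [dist_nonneg (x := x) (y := y)]
    rw [measureReal_def, volume_closedBall_inter_closedBall_congr hd,
      volume_closedBall_zero_inter_closedBall_single dist_nonneg h,
      ENNReal.toReal_ofReal (by positivity)]
  · rw [Set.disjoint_iff_inter_eq_empty.mp (closedBall_disjoint_closedBall (by linarith)),
      measureReal_empty]

theorem integral_Ioi_lensVolume_div_pow_five {d : ℝ} (hd : 0 < d) :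
    ∫ r in Set.Ioi 0, lensVolume d r / r ^ 5 = π / d := by
  set f : ℝ → ℝ := fun r ↦ π / 12 * (2 * r - d) ^ 2 * (4 * r + d) / r ^ 5
  have hf : (fun r ↦ lensVolume d r / r ^ 5) = (Set.Ici (d / 2)).indicator f := by
    ext r
    have hcond : d ≤ 2 * r ↔ d / 2 ≤ r := by constructor <;> intro h <;> linarith
    simp only [lensVolume, Set.indicator_apply, Set.mem_Ici, hcond, ite_div, zero_div, f]
  set F : ℝ → ℝ := fun r ↦
    π / 12 * (-16 * r ^ (-1 : ℤ) + 6 * d * r ^ (-2 : ℤ) - d ^ 3 / 4 * r ^ (-4 : ℤ))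
  have hderiv : ∀ r ∈ Set.Ici (d / 2), HasDerivAt F (f r) r := by
    intro r hr
    have hr0 : r ≠ 0 := by linarith [hr.out]
    have h := ((((hasDerivAt_zpow (-1) r (.inl hr0)).const_mul (-16)).add
      ((hasDerivAt_zpow (-2) r (.inl hr0)).const_mul (6 * d))).sub
      ((hasDerivAt_zpow (-4) r (.inl hr0)).const_mul (d ^ 3 / 4))).const_mul (π / 12)
    refine h.congr_deriv ?_
    simp [f, zpow_neg]
    field_simp
    ring
  have hlim : Tendsto F atTop (𝓝 0) := by
    have h := ((((tendsto_zpow_atTop_zero (by norm_num : (-1 : ℤ) < 0)).const_mul (-16)).add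
      ((tendsto_zpow_atTop_zero (by norm_num : (-2 : ℤ) < 0)).const_mul (6 * d))).sub
      ((tendsto_zpow_atTop_zero (by norm_num : (-4 : ℤ) < 0)).const_mul (d ^ 3 / 4))).const_mul
      (π / 12)
    simpa [F] using h
  have hnonneg : ∀ r ∈ Set.Ioi (d / 2), 0 ≤ f r := by
    intro r hr
    have : 0 < r := by linarith [hr.out]
    positivity
  rw [hf, setIntegral_indicator measurableSet_Ici, Set.inter_eq_right.mpr (Set.Ici_subset_Ioi.mpr (by positivity)),
    integral_Ici_eq_integral_Ioi, integral_Ioi_of_hasDerivAt_of_nonneg' hderiv hnonneg hlim]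
  simp [F, zpow_neg]
  field_simp
  ring

theorem integral_mul_indicator_closedBall_mul_indicator_closedBall {E : Type*}
    [NormedAddCommGroup E] [MeasurableSpace E] [OpensMeasurableSpace E] (μ : Measure E)
    (x y : E) (c r : ℝ) :
    ∫ z, c * (if ‖x - z‖ ≤ r then (1 : ℝ) else 0) * (if ‖y - z‖ ≤ r then (1 : ℝ) else 0) ∂μ
      = c * μ.real (closedBall x r ∩ closedBall y r) := by
  have h : ∀ z, c * (if ‖x - z‖ ≤ r then (1 : ℝ) else 0) * (if ‖y - z‖ ≤ r then (1 : ℝ) else 0)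
      = c * (closedBall x r ∩ closedBall y r).indicator 1 z := by
    intro z
    classical
    simp only [Set.indicator_apply, Set.mem_inter_iff, mem_closedBall, dist_comm z, dist_eq_norm,
      Pi.one_apply]
    split_ifs <;> simp_all
  simp_rw [h]
  rw [integral_const_mul, integral_indicator_one
    (measurableSet_closedBall.inter measurableSet_closedBall)]

/-- Fefferman–de la Llave representation of the Coulomb potential in ℝ³. -/
theorem fefferman_de_la_llave_coulomb
    (x y : EuclideanSpace ℝ (Fin 3)) (hxy : x ≠ y) :
    1 / ‖x - y‖ =
      (1 / π) * ∫ r in Set.Ioi (0 : ℝ), ∫ z : EuclideanSpace ℝ (Fin 3),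
        (1 / r ^ 5) * (if ‖x - z‖ ≤ r then (1 : ℝ) else 0) *
          (if ‖y - z‖ ≤ r then (1 : ℝ) else 0) := by
  simp_rw [integral_mul_indicator_closedBall_mul_indicator_closedBall,
    volume_real_closedBall_inter_closedBall, one_div_mul_eq_div]
  rw [integral_Ioi_lensVolume_div_pow_five (dist_pos.mpr hxy), dist_eq_norm]
  field_simp
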